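/- arXiv:2503.15727 — 2 statements merged into one kernel-verified Lean document; each statement's English description precedes it below -/
import Mathlib

section
/- Let q ≡ r ≡ 3 (mod 8) and s ≡ 7 (mod 8) be three distinct primes with (q/r) = (q/s) = −1 and (s/r) = 1, and let (a, b) be the fundamental (minimal positive) solution of the Pell equation X² − qrs·Y² = 1 (equivalently, ε_{qrs} = a + b√(qrs) is the fundamental unit of ℚ(√(qrs))). Then exactly one of the three numbers 2q(a−1), r(a−1), s(a−1) is a perfect square; moreover: (a) if 2q(a−1) is a square, then there exist integers b₁, b₂ with a − 1 = 2q·b₁², a + 1 = 2rs·b₂² (hence 1 = −q·b₁² + rs·b₂² and b = 2b₁b₂); (b) if r(a−1) is a square, then there exist integers b₁, b₂ with a − 1 = r·b₁², a + 1 = qs·b₂² (hence 2 = −r·b₁² + qs·b₂² and b = b₁b₂); (c) if s(a−1) is a square, then there exist integers b₁, b₂ with a − 1 = s·b₁², a + 1 = qr·b₂² (hence 2 = −s·b₁² + qr·b₂² and b = b₁b₂). -/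
/-
Write `(a - 1)(a + 1) = qrs b²`. The two factors, halved when `a` is odd (then `b` is even), are
coprime, so `a - 1 = g d₁ u²` and `a + 1 = g d₂ v²` with `g ∈ {1, 2}`, `d₁ d₂ = qrs`, `b = g u v`,
and `d₂ v² - d₁ u² = 2 / g`. Reducing this equation modulo a prime dividing `d₁` or `d₂` forces a
Legendre symbol to be `1`; the given symbols, quadratic reciprocity and the supplementary laws
leave only `(d₁, d₂) = (q, rs)` for odd `a` and `(r, qs)`, `(s, qr)` for even `a`, besides
`(qrs, 1)` for odd `a`, which would make `(v, u)` a smaller solution of the Pell equation.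
At most one of the three numbers is a square because `2qr`, `2qs`, `rs` are `2, 2, 5 mod 8`.
-/

noncomputable section

/-- The Legendre symbol `(a/p)` (junk value `0` if `p` is not prime). -/
def leg (p : ℕ) (a : ℤ) : ℤ := if h : p.Prime then @legendreSym p ⟨h⟩ a else 0

/-- The real quadratic field `ℚ(√d)` as a subfield of `ℝ`. -/
def QF1 (d : ℕ) : IntermediateField ℚ ℝ :=
  IntermediateField.adjoin ℚ {Real.sqrt d}

/-- The multiquadratic field `ℚ(√d₁, √d₂)` as a subfield of `ℝ`. -/
def QF2 (d₁ d₂ : ℕ) : IntermediateField ℚ ℝ :=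
  IntermediateField.adjoin ℚ {Real.sqrt d₁, Real.sqrt d₂}

/-- The multiquadratic field `ℚ(√d₁, √d₂, √d₃)` as a subfield of `ℝ`. -/
def QF3 (d₁ d₂ d₃ : ℕ) : IntermediateField ℚ ℝ :=
  IntermediateField.adjoin ℚ {Real.sqrt d₁, Real.sqrt d₂, Real.sqrt d₃}

/-- The 2-class group `A(K)`: the 2-Sylow (2-primary) subgroup of the ideal class group
of the ring of integers of `K`. -/
def twoClassGroup (K : Type*) [Field K] :
    Subgroup (ClassGroup (NumberField.RingOfIntegers K)) :=
  CommGroup.primaryComponent (ClassGroup (NumberField.RingOfIntegers K)) 2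

/-- The 2-rank `dim_{𝔽₂} G/G²` of a finite commutative group `G`. -/
def twoRank (G : Type*) [CommGroup G] : ℕ :=
  Nat.log 2 (Nat.card (G ⧸ (powMonoidHom 2 : G →* G).range))

/-- `rank₂ A(K)`, the 2-rank of the 2-class group of `K`. -/
def rank2A (K : Type*) [Field K] : ℕ := twoRank (twoClassGroup K)

/-- The 2-class number `h₂(K) = |A(K)|`. -/
def h2 (K : Type*) [Field K] : ℕ := Nat.card (twoClassGroup K)

/-- The `n`-th layer `K_n = K(2 cos(2π/2^(n+2)))` of the cyclotomic `ℤ₂`-extension of `K`. -/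
def layer (K : IntermediateField ℚ ℝ) (n : ℕ) : IntermediateField ℚ ℝ :=
  K ⊔ IntermediateField.adjoin ℚ {2 * Real.cos (2 * Real.pi / 2 ^ (n + 2))}

theorem leg_eq (p : ℕ) [Fact p.Prime] (a : ℤ) : leg p a = legendreSym p a :=
  dif_pos Fact.out

theorem Int.exists_eq_sq_of_isCoprime {m n k : ℤ} (hm : 0 < m) (hn : 0 < n) (hk : 0 < k)
    (hmn : IsCoprime m n) (h : m * n = k ^ 2) :
    ∃ u v : ℤ, 0 < u ∧ 0 < v ∧ m = u ^ 2 ∧ n = v ^ 2 ∧ k = u * v := by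
  have hsq : ∀ {x y : ℤ}, 0 < x → IsCoprime x y → x * y = k ^ 2 → ∃ u, 0 < u ∧ x = u ^ 2 := by
    intro x y hx hxy hxyk
    obtain ⟨u, hu | hu⟩ := Int.sq_of_isCoprime hxy hxyk
    · refine ⟨|u|, abs_pos.mpr ?_, by rw [hu, sq_abs]⟩
      rintro rfl
      simp [hu] at hx
    · nlinarith [sq_nonneg u]
  obtain ⟨u, hu, rfl⟩ := hsq hm hmn h
  obtain ⟨v, hv, rfl⟩ := hsq hn hmn.symm (by rw [mul_comm, h])
  refine ⟨u, v, hu, hv, rfl, rfl, ?_⟩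
  exact (pow_left_inj₀ hk.le (mul_pos hu hv).le two_ne_zero).mp (by rw [← h]; ring)

theorem Int.exists_eq_mul_sq_of_isCoprime {m n k : ℤ} {D : ℕ} (hm : 0 < m) (hn : 0 < n)
    (hk : 0 < k) (hmn : IsCoprime m n) (h : m * n = D * k ^ 2) :
    ∃ (d₁ d₂ : ℕ) (u v : ℤ), d₁ * d₂ = D ∧ 0 < u ∧ 0 < v ∧ m = d₁ * u ^ 2 ∧ n = d₂ * v ^ 2 ∧
      k = u * v := by
  -- `d₁ = gcd m D`; the cofactor `d₂` of `D` is coprime to `m / d₁`, hence divides `n`.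
  obtain ⟨d₁, m', d₂, hd₁, hmD, rfl, hD⟩ := Int.exists_gcd_one' (m := m) (n := D)
    (Int.gcd_pos_of_ne_zero_left _ hm.ne')
  lift d₂ to ℕ using by nlinarith [mul_pos hm hn, sq_nonneg k]
  have hd₂ : (d₂ : ℤ) ≠ 0 := by
    rintro h0
    rw [h0, zero_mul] at hD
    nlinarith [mul_pos hm hn, hD]
  have hm' : 0 < m' := pos_of_mul_pos_left hm (by positivity)
  have hm'n : m' * n = d₂ * k ^ 2 :=
    mul_right_cancel₀ (Int.natCast_ne_zero.mpr hd₁.ne') (by linear_combination h + k ^ 2 * hD)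
  obtain ⟨n', rfl⟩ : (d₂ : ℤ) ∣ n :=
    (Int.isCoprime_iff_gcd_eq_one.mpr hmD).symm.dvd_of_dvd_mul_left (Dvd.intro _ hm'n.symm)
  have hn' : 0 < n' := pos_of_mul_pos_right hn (by positivity)
  obtain ⟨u, v, hu, hv, rfl, rfl, rfl⟩ := Int.exists_eq_sq_of_isCoprime hm' hn' hk
    (hmn.of_mul_left_left.of_mul_right_right) (mul_left_cancel₀ hd₂ (by linear_combination hm'n))
  exact ⟨d₁, d₂, u, v, by exact_mod_cast (hD.trans (mul_comm _ _)).symm, hu, hv, mul_comm _ _,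
    rfl, rfl⟩

theorem exists_factorization_of_pell {D : ℕ} (hD : Odd D) {a b : ℤ} (ha : 0 < a) (hb : 0 < b)
    (h : a ^ 2 - D * b ^ 2 = 1) :
    ∃ (g : ℤ) (d₁ d₂ : ℕ) (u v : ℤ), (g = 1 ∨ g = 2) ∧ d₁ * d₂ = D ∧ 0 < u ∧ 0 < v ∧
      a - 1 = g * d₁ * u ^ 2 ∧ a + 1 = g * d₂ * v ^ 2 ∧ b = g * u * v := by
  have hDb : 0 < (D : ℤ) * b ^ 2 := by have := hD.pos; positivity
  rcases Int.even_or_odd' a with ⟨t, rfl | rfl⟩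
  · obtain ⟨d₁, d₂, u, v, hd, hu, hv, h₁, h₂, rfl⟩ :=
      Int.exists_eq_mul_sq_of_isCoprime (m := 2 * t - 1) (n := 2 * t + 1) (D := D) (by nlinarith)
        (by nlinarith) hb ⟨t, 1 - t, by ring⟩ (by linear_combination h)
    exact ⟨1, d₁, d₂, u, v, Or.inl rfl, hd, hu, hv, by linear_combination h₁,
      by linear_combination h₂, by ring⟩
  · obtain ⟨c, rfl⟩ : ∃ c, b = 2 * c := by
      have : Even ((D : ℤ) * b ^ 2) := ⟨2 * t ^ 2 + 2 * t, by linear_combination -h⟩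
      rcases Int.even_mul.mp this with hD' | hb'
      · exact absurd hD' (Int.not_even_iff_odd.mpr (by exact_mod_cast hD))
      · exact (Int.even_pow.mp hb').1.two_dvd
    obtain ⟨d₁, d₂, u, v, hd, hu, hv, h₁, h₂, rfl⟩ :=
      Int.exists_eq_mul_sq_of_isCoprime (m := t) (n := t + 1) (k := c) (D := D) (by nlinarith)
        (by nlinarith) (by omega) ⟨-1, 1, by ring⟩
        (mul_left_cancel₀ four_ne_zero (by linear_combination h))
    exact ⟨2, d₁, d₂, u, v, Or.inr rfl, hd, hu, hv, by linear_combination 2 * h₁,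
      by linear_combination 2 * h₂, by ring⟩

theorem Nat.exists_eq_of_mul_eq_prime_mul {p E d₁ d₂ : ℕ} (hp : p.Prime) (h : d₁ * d₂ = p * E) :
    ∃ e₁ e₂, e₁ * e₂ = E ∧ (d₁ = p * e₁ ∧ d₂ = e₂ ∨ d₁ = e₁ ∧ d₂ = p * e₂) := by
  rcases hp.dvd_mul.mp (Dvd.intro E h.symm) with ⟨e, rfl⟩ | ⟨e, rfl⟩
  · exact ⟨e, d₂, Nat.eq_of_mul_eq_mul_left hp.pos (by rw [← h]; ring), Or.inl ⟨rfl, rfl⟩⟩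
  · exact ⟨d₁, e, Nat.eq_of_mul_eq_mul_left hp.pos (by rw [← h]; ring), Or.inr ⟨rfl, rfl⟩⟩

theorem Nat.eq_of_mul_eq_mul_mul_of_prime {q r s d₁ d₂ : ℕ} (hq : q.Prime) (hr : r.Prime)
    (hs : s.Prime) (h : d₁ * d₂ = q * r * s) :
    d₁ = 1 ∧ d₂ = q * r * s ∨ d₁ = q ∧ d₂ = r * s ∨ d₁ = r ∧ d₂ = q * s ∨
      d₁ = s ∧ d₂ = q * r ∨ d₁ = q * r ∧ d₂ = s ∨ d₁ = q * s ∧ d₂ = r ∨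
      d₁ = r * s ∧ d₂ = q ∨ d₁ = q * r * s ∧ d₂ = 1 := by
  obtain ⟨e₁, e₂, he, hde⟩ :=
    exists_eq_of_mul_eq_prime_mul hq (h.trans (by ring : _ = q * (r * (s * 1))))
  obtain ⟨f₁, f₂, hf, hef⟩ := exists_eq_of_mul_eq_prime_mul hr he
  obtain ⟨g₁, g₂, hg, hfg⟩ := exists_eq_of_mul_eq_prime_mul hs hf
  obtain ⟨rfl, rfl⟩ := mul_eq_one.mp hg
  rcases hde with ⟨rfl, rfl⟩ | ⟨rfl, rfl⟩ <;> rcases hef with ⟨rfl, rfl⟩ | ⟨rfl, rfl⟩ <;>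
    rcases hfg with ⟨rfl, rfl⟩ | ⟨rfl, rfl⟩ <;> simp [mul_comm, mul_left_comm]

theorem legendreSym_ne_neg_one_of_dvd_left {p : ℕ} [Fact p.Prime] {d₁ d₂ k u v : ℤ}
    (h : d₂ * v ^ 2 - d₁ * u ^ 2 = k) (hd : (p : ℤ) ∣ d₁) : legendreSym p (k * d₂) ≠ -1 := by
  rw [Ne, legendreSym.eq_neg_one_iff, not_not]
  have hk : ((d₂ * v ^ 2 : ℤ) : ZMod p) = k := by
    rw [← h, Int.cast_sub, (ZMod.intCast_zmod_eq_zero_iff_dvd _ p).mpr (hd.mul_right _), sub_zero]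
  push_cast at hk ⊢
  by_cases hv : (v : ZMod p) = 0
  · rw [← hk, hv]
    exact ⟨0, by ring⟩
  · exact ⟨k / v, by rw [← hk]; field_simp⟩

-- Stated with `-1 * _` so that `legendreSym.mul` splits off `(-1 / p)`.
theorem legendreSym_ne_neg_one_of_dvd_right {p : ℕ} [Fact p.Prime] {d₁ d₂ k u v : ℤ}
    (h : d₂ * v ^ 2 - d₁ * u ^ 2 = k) (hd : (p : ℤ) ∣ d₂) : legendreSym p (-1 * (k * d₁)) ≠ -1 := by
  rw [← mul_assoc, mul_comm (-1), mul_assoc, neg_one_mul]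
  exact legendreSym_ne_neg_one_of_dvd_left (d₁ := -d₂) (d₂ := -d₁) (u := v) (v := u)
    (by linear_combination h) hd.neg_right

theorem eq_of_mul_sq_sub_mul_sq_eq_one {q r s : ℕ} [Fact q.Prime] [Fact r.Prime] [Fact s.Prime]
    (hq : legendreSym q (-1) = -1) (hsq : legendreSym q s = 1) (hqr : legendreSym r q = -1)
    (hsr : legendreSym r s = 1) (hs : legendreSym s (-1) = -1) (hqs : legendreSym s q = -1)
    (hrs : legendreSym s r = -1) {d₁ d₂ : ℕ} {u v : ℤ} (hd : d₁ * d₂ = q * r * s)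
    (h : d₂ * v ^ 2 - d₁ * u ^ 2 = 1) :
    d₁ = q ∧ d₂ = r * s ∨ d₁ = q * r * s ∧ d₂ = 1 := by
  rcases Nat.eq_of_mul_eq_mul_mul_of_prime Fact.out Fact.out Fact.out hd with
    ⟨h₁, h₂⟩ | ⟨h₁, h₂⟩ | ⟨h₁, h₂⟩ | ⟨h₁, h₂⟩ | ⟨h₁, h₂⟩ | ⟨h₁, h₂⟩ | ⟨h₁, h₂⟩ | ⟨h₁, h₂⟩ <;>
    subst d₁ d₂ <;> push_cast at h
  · exact absurd (legendreSym_ne_neg_one_of_dvd_right (p := q) h ((dvd_mul_right _ _).mul_right _))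
      (by simp only [legendreSym.mul, legendreSym.at_one, hq]; norm_num)
  · exact Or.inl ⟨rfl, rfl⟩
  · exact absurd (legendreSym_ne_neg_one_of_dvd_left (p := r) h dvd_rfl)
      (by simp only [legendreSym.mul, legendreSym.at_one, hqr, hsr]; norm_num)
  · exact absurd (legendreSym_ne_neg_one_of_dvd_right (p := q) h (dvd_mul_right _ _))
      (by simp only [legendreSym.mul, legendreSym.at_one, hq, hsq]; norm_num)
  · exact absurd (legendreSym_ne_neg_one_of_dvd_right (p := s) h dvd_rfl)
      (by simp only [legendreSym.mul, legendreSym.at_one, hs, hqs, hrs]; norm_num)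
  · exact absurd (legendreSym_ne_neg_one_of_dvd_left (p := s) h (dvd_mul_left _ _))
      (by simp only [legendreSym.mul, legendreSym.at_one, hrs]; norm_num)
  · exact absurd (legendreSym_ne_neg_one_of_dvd_left (p := r) h (dvd_mul_right _ _))
      (by simp only [legendreSym.mul, legendreSym.at_one, hqr]; norm_num)
  · exact Or.inr ⟨rfl, rfl⟩

theorem eq_of_mul_sq_sub_mul_sq_eq_two {q r s : ℕ} [Fact q.Prime] [Fact r.Prime] [Fact s.Prime]
    (hq : legendreSym q 2 = -1) (hrq : legendreSym q r = 1) (hsq : legendreSym q s = 1)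
    (hs : legendreSym s (-1) = -1) (hs₂ : legendreSym s 2 = 1) (hqs : legendreSym s q = -1)
    {d₁ d₂ : ℕ} {u v : ℤ} (hd : d₁ * d₂ = q * r * s) (h : d₂ * v ^ 2 - d₁ * u ^ 2 = 2) :
    d₁ = r ∧ d₂ = q * s ∨ d₁ = s ∧ d₂ = q * r := by
  rcases Nat.eq_of_mul_eq_mul_mul_of_prime Fact.out Fact.out Fact.out hd with
    ⟨h₁, h₂⟩ | ⟨h₁, h₂⟩ | ⟨h₁, h₂⟩ | ⟨h₁, h₂⟩ | ⟨h₁, h₂⟩ | ⟨h₁, h₂⟩ | ⟨h₁, h₂⟩ | ⟨h₁, h₂⟩ <;>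
    subst d₁ d₂ <;> push_cast at h
  · exact absurd (legendreSym_ne_neg_one_of_dvd_right (p := s) h (dvd_mul_left _ _))
      (by simp only [legendreSym.mul, legendreSym.at_one, hs, hs₂]; norm_num)
  · exact absurd (legendreSym_ne_neg_one_of_dvd_left (p := q) h dvd_rfl)
      (by simp only [legendreSym.mul, hq, hrq, hsq]; norm_num)
  · exact Or.inl ⟨rfl, rfl⟩
  · exact Or.inr ⟨rfl, rfl⟩
  · exact absurd (legendreSym_ne_neg_one_of_dvd_left (p := q) h (dvd_mul_right _ _))
      (by simp only [legendreSym.mul, hq, hsq]; norm_num)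
  · exact absurd (legendreSym_ne_neg_one_of_dvd_left (p := q) h (dvd_mul_right _ _))
      (by simp only [legendreSym.mul, hq, hrq]; norm_num)
  · exact absurd (legendreSym_ne_neg_one_of_dvd_left (p := s) h (dvd_mul_left _ _))
      (by simp only [legendreSym.mul, hs₂, hqs]; norm_num)
  · exact absurd (legendreSym_ne_neg_one_of_dvd_left (p := q) h ((dvd_mul_right _ _).mul_right _))
      (by simp only [legendreSym.mul, legendreSym.at_one, hq]; norm_num)

theorem legendreSym_neg_one_of_mod_four_eq_three {p : ℕ} [Fact p.Prime] (hp : p % 4 = 3) :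
    legendreSym p (-1) = -1 := by
  rw [legendreSym.at_neg_one (by omega), ZMod.χ₄_nat_three_mod_four hp]

theorem legendreSym_two_of_mod_eight_eq_three {p : ℕ} [Fact p.Prime] (hp : p % 8 = 3) :
    legendreSym p 2 = -1 := by
  rw [legendreSym.at_two (by omega), ZMod.χ₈_nat_eq_if_mod_eight, if_neg (by omega),
    if_neg (by omega)]

theorem legendreSym_two_of_mod_eight_eq_seven {p : ℕ} [Fact p.Prime] (hp : p % 8 = 7) :
    legendreSym p 2 = 1 := by
  rw [legendreSym.at_two (by omega), ZMod.χ₈_nat_eq_if_mod_eight, if_neg (by omega),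
    if_pos (by omega)]

theorem pell_trichotomy {q r s : ℕ} [Fact q.Prime] [Fact r.Prime] [Fact s.Prime]
    (hq8 : q % 8 = 3) (hr8 : r % 8 = 3) (hs8 : s % 8 = 7) (hqr : legendreSym r q = -1)
    (hqs : legendreSym s q = -1) (hsr : legendreSym r s = 1) {a b : ℤ} (ha : 0 < a) (hb : 0 < b)
    (hPell : a ^ 2 - (q * r * s : ℤ) * b ^ 2 = 1)
    (hmin : ∀ a' b' : ℤ, 0 < a' → 0 < b' → a' ^ 2 - (q * r * s : ℤ) * b' ^ 2 = 1 → a ≤ a') :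
    (∃ b₁ b₂ : ℤ, a - 1 = 2 * (q : ℤ) * b₁ ^ 2 ∧ a + 1 = 2 * (r : ℤ) * s * b₂ ^ 2 ∧
        (1 : ℤ) = -(q : ℤ) * b₁ ^ 2 + (r : ℤ) * s * b₂ ^ 2 ∧ b = 2 * b₁ * b₂) ∨
    (∃ b₁ b₂ : ℤ, a - 1 = (r : ℤ) * b₁ ^ 2 ∧ a + 1 = (q : ℤ) * s * b₂ ^ 2 ∧
        (2 : ℤ) = -(r : ℤ) * b₁ ^ 2 + (q : ℤ) * s * b₂ ^ 2 ∧ b = b₁ * b₂) ∨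
    (∃ b₁ b₂ : ℤ, a - 1 = (s : ℤ) * b₁ ^ 2 ∧ a + 1 = (q : ℤ) * r * b₂ ^ 2 ∧
        (2 : ℤ) = -(s : ℤ) * b₁ ^ 2 + (q : ℤ) * r * b₂ ^ 2 ∧ b = b₁ * b₂) := by
  have hq4 : q % 4 = 3 := by omega
  have hr4 : r % 4 = 3 := by omega
  have hs4 : s % 4 = 3 := by omega
  have hs₁ : legendreSym s (-1) = -1 := legendreSym_neg_one_of_mod_four_eq_three hs4
  have hrq : legendreSym q r = 1 := by
    rw [legendreSym.quadratic_reciprocity_three_mod_four hr4 hq4, hqr, neg_neg]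
  have hsq : legendreSym q s = 1 := by
    rw [legendreSym.quadratic_reciprocity_three_mod_four hs4 hq4, hqs, neg_neg]
  have hrs : legendreSym s r = -1 := by
    rw [legendreSym.quadratic_reciprocity_three_mod_four hr4 hs4, hsr]
  have hD : Odd (q * r * s) := by
    rw [Nat.odd_mul, Nat.odd_mul, Nat.odd_iff, Nat.odd_iff, Nat.odd_iff]
    omega
  obtain ⟨g, d₁, d₂, u, v, rfl | rfl, hd, hu, hv, h₁, h₂, rfl⟩ :=
    exists_factorization_of_pell hD ha hb (by exact_mod_cast hPell)
  · rcases eq_of_mul_sq_sub_mul_sq_eq_two (legendreSym_two_of_mod_eight_eq_three hq8)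
      hrq hsq hs₁ (legendreSym_two_of_mod_eight_eq_seven hs8) hqs hd (u := u) (v := v)
      (by linear_combination h₁ - h₂) with ⟨rfl, rfl⟩ | ⟨rfl, rfl⟩ <;> push_cast at h₁ h₂
    · exact Or.inr (Or.inl ⟨u, v, by linear_combination h₁, by linear_combination h₂,
        by linear_combination h₂ - h₁, by ring⟩)
    · exact Or.inr (Or.inr ⟨u, v, by linear_combination h₁, by linear_combination h₂,
        by linear_combination h₂ - h₁, by ring⟩)
  · rcases eq_of_mul_sq_sub_mul_sq_eq_one (legendreSym_neg_one_of_mod_four_eq_three hq4)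
      hsq hqr hsr hs₁ hqs hrs hd (u := u) (v := v) (by linarith) with ⟨rfl, rfl⟩ | ⟨rfl, rfl⟩ <;>
      push_cast at h₁ h₂
    · exact Or.inl ⟨u, v, by linear_combination h₁, by linear_combination h₂,
        by linarith, rfl⟩
    · -- `(v, u)` solves the Pell equation with `v < a`.
      have hav := hmin v u hv hu (by linarith)
      have hD₀ : (0 : ℤ) < q * r * s := by exact_mod_cast hD.pos
      nlinarith [mul_pos hD₀ (pow_pos hu 2)]

theorem not_isSquare_and_isSquare {x y c : ℤ} (hc : c ≠ 0) (hxy : ¬IsSquare (x * y)) :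
    ¬(IsSquare (x * c) ∧ IsSquare (y * c)) := by
  rintro ⟨⟨m, hm⟩, ⟨n, hn⟩⟩
  refine hxy (Rat.isSquare_intCast_iff.mp ⟨m * n / c, ?_⟩)
  qify at hc hm hn
  field_simp
  push_cast
  linear_combination (y * c : ℚ) * hm + (m * m : ℚ) * hn

theorem not_isSquare_of_not_isSquare_intCast {n : ℤ} {m : ℕ} (h : ¬IsSquare (n : ZMod m)) :
    ¬IsSquare n :=
  fun hn => h (hn.map (Int.castRingHom (ZMod m)))

theorem not_isSquare_and_isSquare_of_mod_eight {q r s : ℕ} (hq8 : q % 8 = 3) (hr8 : r % 8 = 3)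
    (hs8 : s % 8 = 7) {c : ℤ} (hc : c ≠ 0) :
    ¬(IsSquare (2 * (q : ℤ) * c) ∧ IsSquare ((r : ℤ) * c)) ∧
      ¬(IsSquare (2 * (q : ℤ) * c) ∧ IsSquare ((s : ℤ) * c)) ∧
      ¬(IsSquare ((r : ℤ) * c) ∧ IsSquare ((s : ℤ) * c)) := by
  have hq : (q : ZMod 8) = 3 := by rw [← ZMod.natCast_mod, hq8]; rfl
  have hr : (r : ZMod 8) = 3 := by rw [← ZMod.natCast_mod, hr8]; rfl
  have hs : (s : ZMod 8) = 7 := by rw [← ZMod.natCast_mod, hs8]; rfl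
  refine ⟨not_isSquare_and_isSquare hc ?_, not_isSquare_and_isSquare hc ?_,
    not_isSquare_and_isSquare hc ?_⟩ <;>
    refine not_isSquare_of_not_isSquare_intCast (m := 8) ?_ <;> push_cast [hq, hr, hs] <;> decide

theorem statement_13_general (q r s : ℕ) (hq : q.Prime) (hr : r.Prime) (hs : s.Prime)
    (hq8 : q % 8 = 3) (hr8 : r % 8 = 3) (hs8 : s % 8 = 7)
    (hlqr : leg r (q : ℤ) = -1) (hlqs : leg s (q : ℤ) = -1) (hlsr : leg r (s : ℤ) = 1)
    (a b : ℤ) (hapos : 0 < a) (hbpos : 0 < b)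
    (hPell : a ^ 2 - (q * r * s : ℤ) * b ^ 2 = 1)
    (hmin : ∀ a' b' : ℤ, 0 < a' → 0 < b' →
      a' ^ 2 - (q * r * s : ℤ) * b' ^ 2 = 1 → a ≤ a') :
    ((IsSquare (2 * (q : ℤ) * (a - 1)) ∨ IsSquare ((r : ℤ) * (a - 1)) ∨
        IsSquare ((s : ℤ) * (a - 1))) ∧
      ¬(IsSquare (2 * (q : ℤ) * (a - 1)) ∧ IsSquare ((r : ℤ) * (a - 1))) ∧
      ¬(IsSquare (2 * (q : ℤ) * (a - 1)) ∧ IsSquare ((s : ℤ) * (a - 1))) ∧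
      ¬(IsSquare ((r : ℤ) * (a - 1)) ∧ IsSquare ((s : ℤ) * (a - 1)))) ∧
    (IsSquare (2 * (q : ℤ) * (a - 1)) →
      ∃ b₁ b₂ : ℤ, a - 1 = 2 * (q : ℤ) * b₁ ^ 2 ∧ a + 1 = 2 * (r : ℤ) * s * b₂ ^ 2 ∧
        (1 : ℤ) = -(q : ℤ) * b₁ ^ 2 + (r : ℤ) * s * b₂ ^ 2 ∧ b = 2 * b₁ * b₂) ∧
    (IsSquare ((r : ℤ) * (a - 1)) →
      ∃ b₁ b₂ : ℤ, a - 1 = (r : ℤ) * b₁ ^ 2 ∧ a + 1 = (q : ℤ) * s * b₂ ^ 2 ∧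
        (2 : ℤ) = -(r : ℤ) * b₁ ^ 2 + (q : ℤ) * s * b₂ ^ 2 ∧ b = b₁ * b₂) ∧
    (IsSquare ((s : ℤ) * (a - 1)) →
      ∃ b₁ b₂ : ℤ, a - 1 = (s : ℤ) * b₁ ^ 2 ∧ a + 1 = (q : ℤ) * r * b₂ ^ 2 ∧
        (2 : ℤ) = -(s : ℤ) * b₁ ^ 2 + (q : ℤ) * r * b₂ ^ 2 ∧ b = b₁ * b₂) := by
  have := Fact.mk hq
  have := Fact.mk hr
  have := Fact.mk hs
  rw [leg_eq] at hlqr hlqs hlsr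
  have ha : a - 1 ≠ 0 := by
    intro h
    rw [show a = 1 by linarith, one_pow, sub_eq_self] at hPell
    simp [hq.ne_zero, hr.ne_zero, hs.ne_zero, hbpos.ne'] at hPell
  obtain ⟨hXY, hXZ, hYZ⟩ := not_isSquare_and_isSquare_of_mod_eight hq8 hr8 hs8 ha
  rcases pell_trichotomy hq8 hr8 hs8 hlqr hlqs hlsr hapos hbpos hPell hmin with hA | hB | hC
  · obtain ⟨b₁, -, h, -⟩ := id hA
    have hX : IsSquare (2 * (q : ℤ) * (a - 1)) := ⟨2 * q * b₁, by rw [h]; ring⟩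
    exact ⟨⟨Or.inl hX, hXY, hXZ, hYZ⟩, fun _ => hA, fun hY => (hXY ⟨hX, hY⟩).elim,
      fun hZ => (hXZ ⟨hX, hZ⟩).elim⟩
  · obtain ⟨b₁, -, h, -⟩ := id hB
    have hY : IsSquare ((r : ℤ) * (a - 1)) := ⟨r * b₁, by rw [h]; ring⟩
    exact ⟨⟨Or.inr (Or.inl hY), hXY, hXZ, hYZ⟩, fun hX => (hXY ⟨hX, hY⟩).elim, fun _ => hB,
      fun hZ => (hYZ ⟨hY, hZ⟩).elim⟩
  · obtain ⟨b₁, -, h, -⟩ := id hC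
    have hZ : IsSquare ((s : ℤ) * (a - 1)) := ⟨s * b₁, by rw [h]; ring⟩
    exact ⟨⟨Or.inr (Or.inr hZ), hXY, hXZ, hYZ⟩, fun hX => (hXZ ⟨hX, hZ⟩).elim,
      fun hY => (hYZ ⟨hY, hZ⟩).elim, fun _ => hC⟩

theorem statement_13 (q r s : ℕ) (hq : q.Prime) (hr : r.Prime) (hs : s.Prime)
    (hqr : q ≠ r) (hqs : q ≠ s) (hrs : r ≠ s)
    (hq8 : q % 8 = 3) (hr8 : r % 8 = 3) (hs8 : s % 8 = 7)
    (hlqr : leg r (q : ℤ) = -1) (hlqs : leg s (q : ℤ) = -1) (hlsr : leg r (s : ℤ) = 1)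
    (a b : ℤ) (hapos : 0 < a) (hbpos : 0 < b)
    (hPell : a ^ 2 - (q * r * s : ℤ) * b ^ 2 = 1)
    (hmin : ∀ a' b' : ℤ, 0 < a' → 0 < b' →
      a' ^ 2 - (q * r * s : ℤ) * b' ^ 2 = 1 → a ≤ a') :
    ((IsSquare (2 * (q : ℤ) * (a - 1)) ∨ IsSquare ((r : ℤ) * (a - 1)) ∨
        IsSquare ((s : ℤ) * (a - 1))) ∧
      ¬(IsSquare (2 * (q : ℤ) * (a - 1)) ∧ IsSquare ((r : ℤ) * (a - 1))) ∧
      ¬(IsSquare (2 * (q : ℤ) * (a - 1)) ∧ IsSquare ((s : ℤ) * (a - 1))) ∧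
      ¬(IsSquare ((r : ℤ) * (a - 1)) ∧ IsSquare ((s : ℤ) * (a - 1)))) ∧
    (IsSquare (2 * (q : ℤ) * (a - 1)) →
      ∃ b₁ b₂ : ℤ, a - 1 = 2 * (q : ℤ) * b₁ ^ 2 ∧ a + 1 = 2 * (r : ℤ) * s * b₂ ^ 2 ∧
        (1 : ℤ) = -(q : ℤ) * b₁ ^ 2 + (r : ℤ) * s * b₂ ^ 2 ∧ b = 2 * b₁ * b₂) ∧
    (IsSquare ((r : ℤ) * (a - 1)) →
      ∃ b₁ b₂ : ℤ, a - 1 = (r : ℤ) * b₁ ^ 2 ∧ a + 1 = (q : ℤ) * s * b₂ ^ 2 ∧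
        (2 : ℤ) = -(r : ℤ) * b₁ ^ 2 + (q : ℤ) * s * b₂ ^ 2 ∧ b = b₁ * b₂) ∧
    (IsSquare ((s : ℤ) * (a - 1)) →
      ∃ b₁ b₂ : ℤ, a - 1 = (s : ℤ) * b₁ ^ 2 ∧ a + 1 = (q : ℤ) * r * b₂ ^ 2 ∧
        (2 : ℤ) = -(s : ℤ) * b₁ ^ 2 + (q : ℤ) * r * b₂ ^ 2 ∧ b = b₁ * b₂) :=
  statement_13_general q r s hq hr hs hq8 hr8 hs8 hlqr hlqs hlsr a b hapos hbpos hPell hmin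
end
end

section
/- Let q ≡ r ≡ 3 (mod 8) and s ≡ 7 (mod 8) be three distinct primes with (q/r) = (q/s) = −1 and (s/r) = 1, and let (x, y) be the fundamental (minimal positive) solution of the Pell equation X² − 2qrs·Y² = 1 (equivalently, ε_{2qrs} = x + y√(2qrs) is the fundamental unit of ℚ(√(2qrs))). Then s(x−1) is a perfect square; moreover, there exist integers y₁, y₂ with x − 1 = s·y₁² and x + 1 = 2qr·y₂² (hence 2 = −s·y₁² + 2qr·y₂² and y = y₁y₂). -/
noncomputable section

section Helpers

private lemma coprime_int_of_prime_ne {p q : ℕ} (hp : p.Prime) (hq : q.Prime) (h : p ≠ q) :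
    IsCoprime (p : ℤ) (q : ℤ) :=
  Nat.isCoprime_iff_coprime.mpr ((Nat.coprime_primes hp hq).2 h)

private lemma leg_one_of (p : ℕ) [Fact p.Prime] (e t : ℤ)
    (hpt : ¬ (p : ℤ) ∣ t) (h : (p : ℤ) ∣ (e * t ^ 2 - 1)) : legendreSym p e = 1 := by
  have ht : (t : ZMod p) ≠ 0 := by
    rwa [Ne, ZMod.intCast_zmod_eq_zero_iff_dvd]
  have h1 : ((e * t ^ 2 : ℤ) : ZMod p) = 1 := by
    have h0 := (ZMod.intCast_zmod_eq_zero_iff_dvd (e * t ^ 2 - 1) p).2 h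
    push_cast at h0 ⊢
    linear_combination h0
  have h2 : legendreSym p (e * t ^ 2) = 1 := by
    rw [legendreSym.eq_one_iff p (by rw [h1]; exact one_ne_zero), h1]
    exact IsSquare.one
  rwa [legendreSym.mul, legendreSym.sq_one' p ht, mul_one] at h2

private lemma split_sq {A B d₁ d₂ c : ℤ} (hd₁ : 0 < d₁) (hd₂ : 0 < d₂) (hA : 0 < A)
    (hB : 0 < B) (hcop : IsCoprime A B) (h1 : d₁ ∣ A) (h2 : d₂ ∣ B)
    (hprod : A * B = d₁ * d₂ * c ^ 2) :
    ∃ a b : ℤ, 0 ≤ a ∧ 0 ≤ b ∧ A = d₁ * a ^ 2 ∧ B = d₂ * b ^ 2 := by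
  obtain ⟨A', rfl⟩ := h1
  obtain ⟨B', rfl⟩ := h2
  have hA' : 0 < A' := by nlinarith
  have hB' : 0 < B' := by nlinarith
  have hcop' : IsCoprime A' B' :=
    (hcop.of_mul_left_right).of_mul_right_right
  have key : A' * B' = c ^ 2 := by
    have hne : d₁ * d₂ ≠ 0 := by positivity
    apply mul_left_cancel₀ hne
    linear_combination hprod
  obtain ⟨a, ha⟩ := Int.sq_of_isCoprime hcop' key
  obtain ⟨b, hb⟩ := Int.sq_of_isCoprime hcop'.symm (show B' * A' = c ^ 2 by linear_combination key)
  have ha' : A' = a ^ 2 := by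
    rcases ha with h | h
    · exact h
    · nlinarith [sq_nonneg a]
  have hb' : B' = b ^ 2 := by
    rcases hb with h | h
    · exact h
    · nlinarith [sq_nonneg b]
  exact ⟨|a|, |b|, abs_nonneg a, abs_nonneg b, by rw [sq_abs, ← ha'], by rw [sq_abs, ← hb']⟩

private lemma kill₁ {p : ℕ} [Fact p.Prime] {d₂ m b : ℤ}
    (hpA : (p : ℤ) ∣ m) (hpB : ¬ (p : ℤ) ∣ (m + 1))
    (hB : m + 1 = d₂ * b ^ 2) (hleg : legendreSym p d₂ = -1) : False := by
  have hb : ¬ (p : ℤ) ∣ b := fun h =>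
    hpB (hB ▸ Dvd.dvd.mul_left (dvd_pow h (by norm_num)) d₂)
  have h1 : (p : ℤ) ∣ (d₂ * b ^ 2 - 1) := by
    have he : d₂ * b ^ 2 - 1 = m := by linear_combination -hB
    rwa [he]
  have := leg_one_of p d₂ b hb h1
  rw [hleg] at this
  norm_num at this

private lemma kill₂ {p : ℕ} [Fact p.Prime] {d₁ m a : ℤ}
    (hpB : (p : ℤ) ∣ (m + 1)) (hpA : ¬ (p : ℤ) ∣ m)
    (hA : m = d₁ * a ^ 2) (hleg : legendreSym p (-d₁) = -1) : False := by
  have ha : ¬ (p : ℤ) ∣ a := fun h =>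
    hpA (hA ▸ Dvd.dvd.mul_left (dvd_pow h (by norm_num)) d₁)
  have h1 : (p : ℤ) ∣ ((-d₁) * a ^ 2 - 1) := by
    have he : (-d₁) * a ^ 2 - 1 = -(m + 1) := by linear_combination hA
    rw [he]
    exact dvd_neg.mpr hpB
  have := leg_one_of p (-d₁) a ha h1
  rw [hleg] at this
  norm_num at this

end Helpers

set_option maxHeartbeats 1000000 in
theorem statement_14 (q r s : ℕ) (hq : q.Prime) (hr : r.Prime) (hs : s.Prime)
    (hqr : q ≠ r) (hqs : q ≠ s) (hrs : r ≠ s)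
    (hq8 : q % 8 = 3) (hr8 : r % 8 = 3) (hs8 : s % 8 = 7)
    (hlqr : leg r (q : ℤ) = -1) (hlqs : leg s (q : ℤ) = -1) (hlsr : leg r (s : ℤ) = 1)
    (x y : ℤ) (hxpos : 0 < x) (hypos : 0 < y)
    (hPell : x ^ 2 - (2 * q * r * s : ℤ) * y ^ 2 = 1)
    (hmin : ∀ x' y' : ℤ, 0 < x' → 0 < y' →
      x' ^ 2 - (2 * q * r * s : ℤ) * y' ^ 2 = 1 → x ≤ x') :
    IsSquare ((s : ℤ) * (x - 1)) ∧
      ∃ y₁ y₂ : ℤ, x - 1 = (s : ℤ) * y₁ ^ 2 ∧ x + 1 = 2 * (q : ℤ) * r * y₂ ^ 2 ∧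
        (2 : ℤ) = -(s : ℤ) * y₁ ^ 2 + 2 * (q : ℤ) * r * y₂ ^ 2 ∧ y = y₁ * y₂ := by
  haveI hqF : Fact q.Prime := ⟨hq⟩
  haveI hrF : Fact r.Prime := ⟨hr⟩
  haveI hsF : Fact s.Prime := ⟨hs⟩
  rw [leg, dif_pos hr] at hlqr hlsr
  rw [leg, dif_pos hs] at hlqs
  have hq2 : q ≠ 2 := by omega
  have hr2 : r ≠ 2 := by omega
  have hs2 : s ≠ 2 := by omega
  have hq4 : q % 4 = 3 := by omega
  have hr4 : r % 4 = 3 := by omega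
  have hs4 : s % 4 = 3 := by omega
  -- atomic Legendre values
  have Lqn1 : legendreSym q (-1) = -1 := by
    rw [legendreSym.at_neg_one hq2, ZMod.χ₄_nat_eq_if_mod_four]
    have h1 : q % 2 ≠ 0 := by omega
    have h2 : q % 4 ≠ 1 := by omega
    simp [h1, h2]
  have Lrn1 : legendreSym r (-1) = -1 := by
    rw [legendreSym.at_neg_one hr2, ZMod.χ₄_nat_eq_if_mod_four]
    have h1 : r % 2 ≠ 0 := by omega
    have h2 : r % 4 ≠ 1 := by omega
    simp [h1, h2]
  have Lsn1 : legendreSym s (-1) = -1 := by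
    rw [legendreSym.at_neg_one hs2, ZMod.χ₄_nat_eq_if_mod_four]
    have h1 : s % 2 ≠ 0 := by omega
    have h2 : s % 4 ≠ 1 := by omega
    simp [h1, h2]
  have Lq2 : legendreSym q 2 = -1 := by
    rw [legendreSym.at_two hq2, ZMod.χ₈_nat_eq_if_mod_eight]
    have h1 : q % 2 ≠ 0 := by omega
    have h2 : ¬ (q % 8 = 1 ∨ q % 8 = 7) := by omega
    simp [h1, h2]
  have Lr2 : legendreSym r 2 = -1 := by
    rw [legendreSym.at_two hr2, ZMod.χ₈_nat_eq_if_mod_eight]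
    have h1 : r % 2 ≠ 0 := by omega
    have h2 : ¬ (r % 8 = 1 ∨ r % 8 = 7) := by omega
    simp [h1, h2]
  have Ls2 : legendreSym s 2 = 1 := by
    rw [legendreSym.at_two hs2, ZMod.χ₈_nat_eq_if_mod_eight]
    have h1 : s % 2 ≠ 0 := by omega
    have h2 : s % 8 = 1 ∨ s % 8 = 7 := by omega
    simp [h1, h2]
  have Lqr : legendreSym q (r : ℤ) = 1 := by
    rw [legendreSym.quadratic_reciprocity_three_mod_four hr4 hq4, hlqr]
    norm_num
  have Lqs : legendreSym q (s : ℤ) = 1 := by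
    rw [legendreSym.quadratic_reciprocity_three_mod_four hs4 hq4, hlqs]
    norm_num
  have Lsr : legendreSym s (r : ℤ) = -1 := by
    rw [legendreSym.quadratic_reciprocity_three_mod_four hr4 hs4, hlsr]
  -- composite Legendre values used to kill branches
  have K2 : legendreSym s (-(2 * (q : ℤ) * r)) = -1 := by
    rw [show (-(2 * (q : ℤ) * r)) = (-1) * 2 * (q : ℤ) * (r : ℤ) by ring,
      legendreSym.mul, legendreSym.mul, legendreSym.mul, Lsn1, Ls2, hlqs, Lsr]
    norm_num
  have K3 : legendreSym r (-(2 * (q : ℤ) * s)) = -1 := by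
    rw [show (-(2 * (q : ℤ) * s)) = (-1) * 2 * (q : ℤ) * (s : ℤ) by ring,
      legendreSym.mul, legendreSym.mul, legendreSym.mul, Lrn1, Lr2, hlqr, hlsr]
    norm_num
  have K4 : legendreSym r (-(2 * (q : ℤ))) = -1 := by
    rw [show (-(2 * (q : ℤ))) = (-1) * 2 * (q : ℤ) by ring,
      legendreSym.mul, legendreSym.mul, Lrn1, Lr2, hlqr]
    norm_num
  have K6 : legendreSym r ((q : ℤ) * s) = -1 := by
    rw [legendreSym.mul, hlqr, hlsr]; norm_num
  have K8 : legendreSym s (-2 : ℤ) = -1 := by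
    rw [show (-2 : ℤ) = (-1) * 2 by norm_num, legendreSym.mul, Lsn1, Ls2]
    norm_num
  have K10 : legendreSym s (-((q : ℤ) * r)) = -1 := by
    rw [show (-((q : ℤ) * r)) = (-1) * (q : ℤ) * (r : ℤ) by ring,
      legendreSym.mul, legendreSym.mul, Lsn1, hlqs, Lsr]
    norm_num
  have K11 : legendreSym q (2 * (r : ℤ)) = -1 := by
    rw [legendreSym.mul, Lq2, Lqr]; norm_num
  have K12 : legendreSym q (2 * (r : ℤ) * s) = -1 := by
    rw [legendreSym.mul, legendreSym.mul, Lq2, Lqr, Lqs]; norm_num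
  have K13 : legendreSym q (-((r : ℤ) * s)) = -1 := by
    rw [show (-((r : ℤ) * s)) = (-1) * (r : ℤ) * (s : ℤ) by ring,
      legendreSym.mul, legendreSym.mul, Lqn1, Lqr, Lqs]
    norm_num
  have K14 : legendreSym q (-(r : ℤ)) = -1 := by
    rw [show (-(r : ℤ)) = (-1) * (r : ℤ) by ring, legendreSym.mul, Lqn1, Lqr]
    norm_num
  have K15 : legendreSym q (-(s : ℤ)) = -1 := by
    rw [show (-(s : ℤ)) = (-1) * (s : ℤ) by ring, legendreSym.mul, Lqn1, Lqs]
    norm_num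
  -- basic positivity
  have hq0 : (0 : ℤ) < q := by exact_mod_cast hq.pos
  have hr0 : (0 : ℤ) < r := by exact_mod_cast hr.pos
  have hs0 : (0 : ℤ) < s := by exact_mod_cast hs.pos
  have hq1 : (1 : ℤ) ≤ q := hq0
  have hr1 : (1 : ℤ) ≤ r := hr0
  have hs1 : (1 : ℤ) ≤ s := hs0
  -- x > 1
  have hy1 : (1 : ℤ) ≤ y := hypos
  have hy2 : (1 : ℤ) ≤ y ^ 2 := by
    calc (1 : ℤ) = 1 * 1 := by ring
    _ ≤ y * y := mul_le_mul hy1 hy1 zero_le_one (zero_le_one.trans hy1)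
    _ = y ^ 2 := by ring
  have hqr1 : (1 : ℤ) ≤ (q : ℤ) * r := by
    calc (1 : ℤ) = 1 * 1 := by ring
    _ ≤ (q : ℤ) * r := mul_le_mul hq1 hr1 zero_le_one (zero_le_one.trans hq1)
  have hqrs1 : (1 : ℤ) ≤ (q : ℤ) * r * s := by
    calc (1 : ℤ) = 1 * 1 := by ring
    _ ≤ ((q : ℤ) * r) * s := mul_le_mul hqr1 hs1 zero_le_one (zero_le_one.trans hqr1)
  have hprod1 : (1 : ℤ) ≤ (q : ℤ) * r * s * y ^ 2 := by
    calc (1 : ℤ) = 1 * 1 := by ring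
    _ ≤ ((q : ℤ) * r * s) * y ^ 2 :=
        mul_le_mul hqrs1 hy2 zero_le_one (zero_le_one.trans hqrs1)
  have hkey : x ^ 2 = 1 + 2 * ((q : ℤ) * r * s * y ^ 2) := by linear_combination hPell
  have hx3 : 3 ≤ x ^ 2 := by
    rw [hkey]
    linarith only [hprod1]
  have hxle : (1 : ℤ) ≤ x := hxpos
  have hx1 : 1 < x := by
    rcases lt_or_ge 1 x with h | h
    · exact h
    · exfalso
      have hx1' : x = 1 := le_antisymm h hxle
      rw [hx1'] at hx3
      norm_num at hx3
  -- x is odd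
  have hxodd : ∃ m : ℤ, x = 2 * m + 1 := by
    rcases Int.even_or_odd x with ⟨v, hv⟩ | ⟨v, hv⟩
    · exfalso
      rw [hv] at hPell
      have h2 : (2 : ℤ) ∣ 1 := ⟨2 * v ^ 2 - (q : ℤ) * r * s * y ^ 2, by linear_combination -hPell⟩
      omega
    · exact ⟨v, hv⟩
  obtain ⟨m, hxm⟩ := hxodd
  have hmpos : 0 < m := by omega
  have hm1pos : 0 < m + 1 := by omega
  have hcop : IsCoprime m (m + 1) := ⟨-1, 1, by ring⟩
  -- y is even
  have hyeven : ∃ c : ℤ, y = 2 * c := by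
    rcases Int.even_or_odd y with ⟨v, hv⟩ | ⟨v, hv⟩
    · exact ⟨v, by omega⟩
    · exfalso
      rw [hxm, hv] at hPell
      have key : (2 : ℤ) * ((q : ℤ) * r * s * (2 * v + 1) ^ 2) = 2 * (2 * (m ^ 2 + m)) := by
        linear_combination -hPell
      have key' : (q : ℤ) * r * s * (2 * v + 1) ^ 2 = 2 * (m ^ 2 + m) :=
        mul_left_cancel₀ two_ne_zero key
      have h2 : (2 : ℤ) ∣ (q : ℤ) * r * s * (2 * v + 1) ^ 2 := ⟨m ^ 2 + m, key'⟩
      rcases Int.prime_two.dvd_or_dvd h2 with h | h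
      · rcases Int.prime_two.dvd_or_dvd h with h' | h'
        · rcases Int.prime_two.dvd_or_dvd h' with h'' | h''
          · have : (2 : ℕ) ∣ q := by exact_mod_cast h''
            omega
          · have : (2 : ℕ) ∣ r := by exact_mod_cast h''
            omega
        · have : (2 : ℕ) ∣ s := by exact_mod_cast h'
          omega
      · have := Int.prime_two.dvd_of_dvd_pow h
        omega
  obtain ⟨c, hyc⟩ := hyeven
  have hcpos : 0 < c := by omega
  -- the main product identity
  rw [hxm, hyc] at hPell
  have h4 : (4 : ℤ) * (m * (m + 1)) = 4 * (2 * (q : ℤ) * r * s * c ^ 2) := by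
    linear_combination hPell
  have hAB : m * (m + 1) = 2 * (q : ℤ) * r * s * c ^ 2 :=
    mul_left_cancel₀ (by norm_num) h4
  -- primes in ℤ
  have hqZ : Prime ((q : ℕ) : ℤ) := Nat.prime_iff_prime_int.mp hq
  have hrZ : Prime ((r : ℕ) : ℤ) := Nat.prime_iff_prime_int.mp hr
  have hsZ : Prime ((s : ℕ) : ℤ) := Nat.prime_iff_prime_int.mp hs
  -- coprimality between the primes
  have cqr : IsCoprime (q : ℤ) (r : ℤ) := coprime_int_of_prime_ne hq hr hqr
  have cqs : IsCoprime (q : ℤ) (s : ℤ) := coprime_int_of_prime_ne hq hs hqs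
  have crs : IsCoprime (r : ℤ) (s : ℤ) := coprime_int_of_prime_ne hr hs hrs
  have c2q : IsCoprime (2 : ℤ) (q : ℤ) := by
    have := coprime_int_of_prime_ne Nat.prime_two hq (by omega)
    exact_mod_cast this
  have c2r : IsCoprime (2 : ℤ) (r : ℤ) := by
    have := coprime_int_of_prime_ne Nat.prime_two hr (by omega)
    exact_mod_cast this
  have c2s : IsCoprime (2 : ℤ) (s : ℤ) := by
    have := coprime_int_of_prime_ne Nat.prime_two hs (by omega)
    exact_mod_cast this
  -- each prime divides exactly one of m, m+1
  have hsplit : ∀ p : ℤ, Prime p → p ∣ (2 * (q : ℤ) * r * s) →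
      (p ∣ m ∧ ¬ p ∣ (m + 1)) ∨ (p ∣ (m + 1) ∧ ¬ p ∣ m) := by
    intro p hp hpd
    have hpm : p ∣ m * (m + 1) := by
      rw [hAB]
      exact Dvd.dvd.mul_right hpd _
    have hnot : ¬ (p ∣ m ∧ p ∣ (m + 1)) := fun ⟨h1, h2⟩ =>
      hp.not_unit (hcop.isUnit_of_dvd' h1 h2)
    rcases hp.dvd_or_dvd hpm with h | h
    · exact Or.inl ⟨h, fun h' => hnot ⟨h, h'⟩⟩
    · exact Or.inr ⟨h, fun h' => hnot ⟨h', h⟩⟩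
  rcases hsplit 2 Int.prime_two ⟨(q : ℤ) * r * s, by ring⟩ with ⟨h2A, h2B⟩ | ⟨h2B, h2A⟩ <;>
    rcases hsplit (q : ℤ) hqZ ⟨2 * (r : ℤ) * s, by ring⟩ with ⟨hqA, hqB⟩ | ⟨hqB, hqA⟩ <;>
    rcases hsplit (r : ℤ) hrZ ⟨2 * (q : ℤ) * s, by ring⟩ with ⟨hrA, hrB⟩ | ⟨hrB, hrA⟩ <;>
    rcases hsplit (s : ℤ) hsZ ⟨2 * (q : ℤ) * r, by ring⟩ with ⟨hsA, hsB⟩ | ⟨hsB, hsA⟩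
  -- 1: d₁ = 2qrs, d₂ = 1 : contradicts minimality
  · obtain ⟨a, b, ha, hb, hA, hB⟩ := split_sq (c := c)
      (mul_pos (mul_pos (mul_pos two_pos hq0) hr0) hs0) one_pos hmpos hm1pos hcop
      (((c2s.mul_left cqs).mul_left crs).mul_dvd
        ((c2r.mul_left cqr).mul_dvd (c2q.mul_dvd h2A hqA) hrA) hsA)
      (one_dvd _) (by linear_combination hAB)
    exfalso
    have hapos : 0 < a := by
      rcases ha.lt_or_eq with h | h
      · exact h
      · rw [← h] at hA; simp at hA; omega
    have hbpos : 0 < b := by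
      rcases hb.lt_or_eq with h | h
      · exact h
      · rw [← h] at hB; simp at hB; omega
    have hPell' : b ^ 2 - (2 * (q : ℤ) * r * s) * a ^ 2 = 1 := by
      linear_combination hA - hB
    have hxb := hmin b a hbpos hapos hPell'
    have hb2 : b ^ 2 = m + 1 := by linear_combination -hB
    have hxx : x * x ≤ b * b := mul_le_mul hxb hxb (le_of_lt hxpos) hb
    have h1 : (2 * m + 1) * (2 * m + 1) ≤ m + 1 := by
      calc (2 * m + 1) * (2 * m + 1) = x * x := by rw [hxm]
      _ ≤ b * b := hxx
      _ = m + 1 := by linear_combination hb2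
    have h2 : m * 1 ≤ m * m :=
      mul_le_mul_of_nonneg_left (by omega : (1 : ℤ) ≤ m) (le_of_lt hmpos)
    linarith only [h1, h2, hmpos]
  -- 2: d₁ = 2qr, d₂ = s
  · obtain ⟨a, b, ha, hb, hA, hB⟩ := split_sq (c := c)
      (mul_pos (mul_pos two_pos hq0) hr0) hs0 hmpos hm1pos hcop
      ((c2r.mul_left cqr).mul_dvd (c2q.mul_dvd h2A hqA) hrA) hsB
      (by linear_combination hAB)
    exact (kill₂ hsB hsA hA K2).elim
  -- 3: d₁ = 2qs, d₂ = r
  · obtain ⟨a, b, ha, hb, hA, hB⟩ := split_sq (c := c)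
      (mul_pos (mul_pos two_pos hq0) hs0) hr0 hmpos hm1pos hcop
      ((c2s.mul_left cqs).mul_dvd (c2q.mul_dvd h2A hqA) hsA) hrB
      (by linear_combination hAB)
    exact (kill₂ hrB hrA hA K3).elim
  -- 4: d₁ = 2q, d₂ = rs
  · obtain ⟨a, b, ha, hb, hA, hB⟩ := split_sq (c := c)
      (mul_pos two_pos hq0) (mul_pos hr0 hs0) hmpos hm1pos hcop
      (c2q.mul_dvd h2A hqA) (crs.mul_dvd hrB hsB)
      (by linear_combination hAB)
    exact (kill₂ hrB hrA hA K4).elim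
  -- 5: d₁ = 2rs, d₂ = q
  · obtain ⟨a, b, ha, hb, hA, hB⟩ := split_sq (c := c)
      (mul_pos (mul_pos two_pos hr0) hs0) hq0 hmpos hm1pos hcop
      ((c2s.mul_left crs).mul_dvd (c2r.mul_dvd h2A hrA) hsA) hqB
      (by linear_combination hAB)
    exact (kill₁ hrA hrB hB hlqr).elim
  -- 6: d₁ = 2r, d₂ = qs
  · obtain ⟨a, b, ha, hb, hA, hB⟩ := split_sq (c := c)
      (mul_pos two_pos hr0) (mul_pos hq0 hs0) hmpos hm1pos hcop
      (c2r.mul_dvd h2A hrA) (cqs.mul_dvd hqB hsB)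
      (by linear_combination hAB)
    exact (kill₁ hrA hrB hB K6).elim
  -- 7: d₁ = 2s, d₂ = qr : the surviving case
  · obtain ⟨a, b, ha, hb, hA, hB⟩ := split_sq (c := c)
      (mul_pos two_pos hs0) (mul_pos hq0 hr0) hmpos hm1pos hcop
      (c2s.mul_dvd h2A hsA) (cqr.mul_dvd hqB hrB)
      (by linear_combination hAB)
    have hx1' : x - 1 = (s : ℤ) * (2 * a) ^ 2 := by linear_combination hxm + 2 * hA
    have hx2' : x + 1 = 2 * (q : ℤ) * r * b ^ 2 := by linear_combination hxm + 2 * hB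
    have hc2 : (2 * (q : ℤ) * r * s) * c ^ 2 = (2 * (q : ℤ) * r * s) * (a * b) ^ 2 := by
      linear_combination (m + 1) * hA + (2 * (s : ℤ) * a ^ 2) * hB - hAB
    have hcab : c = a * b := by
      have h0 : c ^ 2 = (a * b) ^ 2 :=
        mul_left_cancel₀ (ne_of_gt (mul_pos (mul_pos (mul_pos two_pos hq0) hr0) hs0)) hc2
      have hfac : (c - a * b) * (c + a * b) = 0 := by linear_combination h0
      rcases mul_eq_zero.mp hfac with h | h
      · linarith only [h]
      · exfalso
        have hab := mul_nonneg ha hb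
        linarith only [h, hab, hcpos]
    refine ⟨⟨(s : ℤ) * (2 * a), ?_⟩, 2 * a, b, hx1', hx2', by linear_combination hx2' - hx1', ?_⟩
    · rw [hx1']; ring
    · rw [hyc, hcab]; ring
  -- 8: d₁ = 2, d₂ = qrs
  · obtain ⟨a, b, ha, hb, hA, hB⟩ := split_sq (c := c)
      two_pos (mul_pos (mul_pos hq0 hr0) hs0) hmpos hm1pos hcop
      h2A ((cqs.mul_left crs).mul_dvd (cqr.mul_dvd hqB hrB) hsB)
      (by linear_combination hAB)
    exact (kill₂ hsB hsA hA K8).elim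
  -- 9: d₁ = qrs, d₂ = 2
  · obtain ⟨a, b, ha, hb, hA, hB⟩ := split_sq (c := c)
      (mul_pos (mul_pos hq0 hr0) hs0) two_pos hmpos hm1pos hcop
      ((cqs.mul_left crs).mul_dvd (cqr.mul_dvd hqA hrA) hsA) h2B
      (by linear_combination hAB)
    exact (kill₁ hqA hqB hB Lq2).elim
  -- 10: d₁ = qr, d₂ = 2s
  · obtain ⟨a, b, ha, hb, hA, hB⟩ := split_sq (c := c)
      (mul_pos hq0 hr0) (mul_pos two_pos hs0) hmpos hm1pos hcop
      (cqr.mul_dvd hqA hrA) (c2s.mul_dvd h2B hsB)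
      (by linear_combination hAB)
    exact (kill₂ hsB hsA hA K10).elim
  -- 11: d₁ = qs, d₂ = 2r
  · obtain ⟨a, b, ha, hb, hA, hB⟩ := split_sq (c := c)
      (mul_pos hq0 hs0) (mul_pos two_pos hr0) hmpos hm1pos hcop
      (cqs.mul_dvd hqA hsA) (c2r.mul_dvd h2B hrB)
      (by linear_combination hAB)
    exact (kill₁ hqA hqB hB K11).elim
  -- 12: d₁ = q, d₂ = 2rs
  · obtain ⟨a, b, ha, hb, hA, hB⟩ := split_sq (c := c)
      hq0 (mul_pos (mul_pos two_pos hr0) hs0) hmpos hm1pos hcop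
      hqA ((c2s.mul_left crs).mul_dvd (c2r.mul_dvd h2B hrB) hsB)
      (by linear_combination hAB)
    exact (kill₁ hqA hqB hB K12).elim
  -- 13: d₁ = rs, d₂ = 2q
  · obtain ⟨a, b, ha, hb, hA, hB⟩ := split_sq (c := c)
      (mul_pos hr0 hs0) (mul_pos two_pos hq0) hmpos hm1pos hcop
      (crs.mul_dvd hrA hsA) (c2q.mul_dvd h2B hqB)
      (by linear_combination hAB)
    exact (kill₂ hqB hqA hA K13).elim
  -- 14: d₁ = r, d₂ = 2qs
  · obtain ⟨a, b, ha, hb, hA, hB⟩ := split_sq (c := c)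
      hr0 (mul_pos (mul_pos two_pos hq0) hs0) hmpos hm1pos hcop
      hrA ((c2s.mul_left cqs).mul_dvd (c2q.mul_dvd h2B hqB) hsB)
      (by linear_combination hAB)
    exact (kill₂ hqB hqA hA K14).elim
  -- 15: d₁ = s, d₂ = 2qr
  · obtain ⟨a, b, ha, hb, hA, hB⟩ := split_sq (c := c)
      hs0 (mul_pos (mul_pos two_pos hq0) hr0) hmpos hm1pos hcop
      hsA ((c2r.mul_left cqr).mul_dvd (c2q.mul_dvd h2B hqB) hrB)
      (by linear_combination hAB)
    exact (kill₂ hqB hqA hA K15).elim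
  -- 16: d₁ = 1, d₂ = 2qrs
  · obtain ⟨a, b, ha, hb, hA, hB⟩ := split_sq (c := c)
      one_pos (mul_pos (mul_pos (mul_pos two_pos hq0) hr0) hs0) hmpos hm1pos hcop
      (one_dvd _)
      (((c2s.mul_left cqs).mul_left crs).mul_dvd
        ((c2r.mul_left cqr).mul_dvd (c2q.mul_dvd h2B hqB) hrB) hsB)
      (by linear_combination hAB)
    exact (kill₂ hqB hqA hA Lqn1).elim
end
end
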